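/- For every real x ≥ 1, the function t ↦ ln_t(x) = (x^t − 1)/t is convex on (0, ∞). -/

import Mathlib

/-!
Write `xᵗ = exp (a t)` with `a = log x ≥ 0`. The second derivative of `t ↦ (exp (a t) - 1) / t` is
`(exp u * (u² - 2u + 2) - 2) / t³` with `u = a t`, and its numerator is nonnegative because
`(1 + u + u²/2) (u² - 2u + 2) = 2 + u⁴/2`.
-/

open Real Set

lemma two_le_exp_mul_sq_sub_two_mul_add_two {u : ℝ} (hu : 0 ≤ u) :
    2 ≤ exp u * (u ^ 2 - 2 * u + 2) :=
  calc (2 : ℝ) ≤ 2 + u ^ 4 / 2 := le_add_of_nonneg_right (by positivity)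
    _ = (1 + u + u ^ 2 / 2) * (u ^ 2 - 2 * u + 2) := by ring
    _ ≤ exp u * (u ^ 2 - 2 * u + 2) := by
      gcongr
      · nlinarith [sq_nonneg (u - 1)]
      · exact quadratic_le_exp_of_nonneg hu

lemma hasDerivAt_exp_mul_sub_one_div (a : ℝ) {t : ℝ} (ht : t ≠ 0) :
    HasDerivAt (fun s => (exp (a * s) - 1) / s)
      ((a * t * exp (a * t) - exp (a * t) + 1) / t ^ 2) t := by
  have hexp := ((hasDerivAt_id' t).const_mul a).exp
  refine ((hexp.sub_const 1).fun_div (hasDerivAt_id' t) ht).congr_deriv ?_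
  ring

lemma hasDerivAt_deriv_exp_mul_sub_one_div (a : ℝ) {t : ℝ} (ht : t ≠ 0) :
    HasDerivAt (fun s => (a * s * exp (a * s) - exp (a * s) + 1) / s ^ 2)
      ((exp (a * t) * ((a * t) ^ 2 - 2 * (a * t) + 2) - 2) / t ^ 3) t := by
  have hexp := ((hasDerivAt_id' t).const_mul a).exp
  have hnum := ((((hasDerivAt_id' t).const_mul a).fun_mul hexp).fun_sub hexp).add_const 1
  refine (hnum.fun_div (hasDerivAt_pow 2 t) (pow_ne_zero 2 ht)).congr_deriv ?_
  field_simp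
  ring

theorem convexOn_exp_mul_sub_one_div {a : ℝ} (ha : 0 ≤ a) :
    ConvexOn ℝ (Ioi 0) (fun t => (exp (a * t) - 1) / t) := by
  have h' (t : ℝ) (ht : 0 < t) := hasDerivAt_exp_mul_sub_one_div a ht.ne'
  have h'' (t : ℝ) (ht : 0 < t) := hasDerivAt_deriv_exp_mul_sub_one_div a ht.ne'
  refine convexOn_of_hasDerivWithinAt2_nonneg (convex_Ioi 0)
    (f' := fun t => (a * t * exp (a * t) - exp (a * t) + 1) / t ^ 2)
    (f'' := fun t => (exp (a * t) * ((a * t) ^ 2 - 2 * (a * t) + 2) - 2) / t ^ 3)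
    (fun t ht => (h' t ht).continuousAt.continuousWithinAt) ?_ ?_ ?_ <;> rw [interior_Ioi]
  · exact fun t ht => (h' t ht).hasDerivWithinAt
  · exact fun t ht => (h'' t ht).hasDerivWithinAt
  · intro t (ht : 0 < t)
    have := two_le_exp_mul_sq_sub_two_mul_add_two (mul_nonneg ha ht.le)
    exact div_nonneg (by linarith) (by positivity)

theorem stmt13 (x : ℝ) (hx : 1 ≤ x) :
    ConvexOn ℝ (Set.Ioi (0 : ℝ)) (fun t : ℝ => (x ^ t - 1) / t) := by
  have hpow : (fun t : ℝ => (x ^ t - 1) / t) = fun t => (exp (log x * t) - 1) / t := by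
    funext t
    rw [rpow_def_of_pos (by linarith)]
  rw [hpow]
  exact convexOn_exp_mul_sub_one_div (log_nonneg hx)
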